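/- Let g, g̃ be continuous on [-1,1] and set F(x) = ∫_{-1}^1 e^{-|x-y|}(g(y) - g̃(y)) dy. Then the squared H^1 norm satisfies ∫_{-1}^1 (F(x)^2 + F'(x)^2) dx ≤ 16 (max_{y∈[-1,1]} |g(y) - g̃(y)|)^2. -/

import Mathlib

/-!
Splitting the kernel at `y = x` writes `F = L + R` with `L x = e^{-x} ∫_{-1}^x e^y h` and
`R x = e^x ∫_x^1 e^{-y} h`, where `h = g - g̃`; differentiating gives `F' = R - L`. Since the kernel
integrates to at most `1` over each half-line, `|L|, |R| ≤ M`, hence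
`F² + F'² = 2 (L² + R²) ≤ 4 M²` on `(-1, 1)` and the integral is at most `8 M²`.
-/

open Real MeasureTheory Set intervalIntegral Filter Topology

noncomputable section

def expConvLeft (h : ℝ → ℝ) (a x : ℝ) : ℝ := exp (-x) * ∫ y in a..x, exp y * h y

def expConvRight (h : ℝ → ℝ) (b x : ℝ) : ℝ := exp x * ∫ y in x..b, exp (-y) * h y

end

section

variable {h : ℝ → ℝ} {a b x M : ℝ}

lemma expConvRight_eq_expConvLeft_neg (h : ℝ → ℝ) (b x : ℝ) :
    expConvRight h b x = expConvLeft (fun y => h (-y)) (-b) (-x) := by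
  rw [expConvLeft, expConvRight, neg_neg,
    ← integral_comp_neg fun y => exp y * h (-y)]
  simp only [neg_neg]

lemma integral_exp_neg_abs_sub_mul (hh : ContinuousOn h (Icc a b)) (hx : x ∈ Icc a b) :
    ∫ y in a..b, exp (-|x - y|) * h y = expConvLeft h a x + expConvRight h b x := by
  have hint : ∀ c d, c ∈ Icc a b → d ∈ Icc a b →
      IntervalIntegrable (fun y => exp (-|x - y|) * h y) volume c d := fun c d hc hd =>
    ((by fun_prop : Continuous fun y => exp (-|x - y|)).continuousOn.mul
      (hh.mono (uIcc_subset_Icc hc hd))).intervalIntegrable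
  rw [← integral_add_adjacent_intervals (hint a x (left_mem_Icc.2 (hx.1.trans hx.2)) hx)
    (hint x b hx (right_mem_Icc.2 (hx.1.trans hx.2))), expConvLeft, expConvRight,
    ← intervalIntegral.integral_const_mul, ← intervalIntegral.integral_const_mul]
  congr 1
  · refine integral_congr fun y hy => ?_
    rw [uIcc_of_le hx.1] at hy
    simp only [abs_of_nonneg (sub_nonneg.2 hy.2), neg_sub, ← mul_assoc, ← exp_add]
    ring_nf
  · refine integral_congr fun y hy => ?_
    rw [uIcc_of_le hx.2] at hy
    simp only [abs_of_nonpos (sub_nonpos.2 hy.1), neg_neg, ← mul_assoc, ← exp_add]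
    ring_nf

lemma hasDerivAt_expConvLeft (hh : ContinuousOn h (Icc a b)) (hx : x ∈ Ioo a b) :
    HasDerivAt (expConvLeft h a) (h x - expConvLeft h a x) x := by
  have hf : ContinuousOn (fun y => exp y * h y) (Icc a b) := continuous_exp.continuousOn.mul hh
  have hax : uIcc a x ⊆ Icc a b :=
    uIcc_subset_Icc (left_mem_Icc.2 (hx.1.trans hx.2).le) (Ioo_subset_Icc_self hx)
  have hI : HasDerivAt (fun u => ∫ y in a..u, exp y * h y) (exp x * h x) x :=
    integral_hasDerivAt_right (hf.mono hax).intervalIntegrable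
      ((hf.mono Ioo_subset_Icc_self).stronglyMeasurableAtFilter isOpen_Ioo x hx)
      (hf.continuousAt (Icc_mem_nhds hx.1 hx.2))
  refine (((hasDerivAt_neg x).exp).mul hI).congr_deriv ?_
  rw [expConvLeft, mul_neg_one, ← mul_assoc, ← exp_add, neg_add_cancel, exp_zero]
  ring

lemma hasDerivAt_expConvRight (hh : ContinuousOn h (Icc a b)) (hx : x ∈ Ioo a b) :
    HasDerivAt (expConvRight h b) (expConvRight h b x - h x) x := by
  have hneg : ContinuousOn (fun y => h (-y)) (Icc (-b) (-a)) :=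
    hh.comp continuous_neg.continuousOn fun y hy => ⟨le_neg.1 hy.2, neg_le.1 hy.1⟩
  have hL := hasDerivAt_expConvLeft hneg (x := -x) ⟨neg_lt_neg hx.2, neg_lt_neg hx.1⟩
  have hcomp : expConvRight h b = expConvLeft (fun y => h (-y)) (-b) ∘ Neg.neg :=
    funext (expConvRight_eq_expConvLeft_neg h b)
  rw [hcomp]
  refine (hL.comp x (hasDerivAt_neg x)).congr_deriv ?_
  rw [Function.comp_apply, neg_neg]
  ring

lemma abs_expConvLeft_le (hax : a ≤ x) (hM : ∀ y ∈ Icc a x, |h y| ≤ M) :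
    |expConvLeft h a x| ≤ M := by
  have hM0 : 0 ≤ M := (abs_nonneg _).trans (hM a (left_mem_Icc.2 hax))
  have hpoint : ∀ y ∈ Ioc a x, ‖exp y * h y‖ ≤ M * exp y := fun y hy => by
    rw [norm_mul, norm_of_nonneg (exp_pos y).le, mul_comm]
    exact mul_le_mul_of_nonneg_right (hM y (Ioc_subset_Icc_self hy)) (exp_pos y).le
  have hI : |∫ y in a..x, exp y * h y| ≤ M * exp x :=
    calc |∫ y in a..x, exp y * h y| ≤ ∫ y in a..x, M * exp y :=
          intervalIntegral.norm_integral_le_of_norm_le hax (Eventually.of_forall hpoint)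
            ((by fun_prop : Continuous fun y => M * exp y).intervalIntegrable a x)
      _ = M * (exp x - exp a) := by rw [intervalIntegral.integral_const_mul, integral_exp]
      _ ≤ M * exp x := mul_le_mul_of_nonneg_left (by linarith [exp_pos a]) hM0
  rw [expConvLeft, abs_mul, abs_of_pos (exp_pos _)]
  calc exp (-x) * |∫ y in a..x, exp y * h y| ≤ exp (-x) * (M * exp x) :=
        mul_le_mul_of_nonneg_left hI (exp_pos _).le
    _ = M := by rw [mul_left_comm, ← exp_add, neg_add_cancel, exp_zero, mul_one]

lemma abs_expConvRight_le (hxb : x ≤ b) (hM : ∀ y ∈ Icc x b, |h y| ≤ M) :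
    |expConvRight h b x| ≤ M := by
  rw [expConvRight_eq_expConvLeft_neg]
  exact abs_expConvLeft_le (neg_le_neg hxb) fun y hy => hM (-y) ⟨le_neg.1 hy.2, neg_le.1 hy.1⟩

end

theorem stmt_16 (g gt : ℝ → ℝ)
    (hg : ContinuousOn g (Set.Icc (-1:ℝ) 1)) (hgt : ContinuousOn gt (Set.Icc (-1:ℝ) 1))
    (F : ℝ → ℝ)
    (hF : ∀ x, F x = ∫ y in (-1:ℝ)..1, Real.exp (-|x - y|) * (g y - gt y))
    (M : ℝ) (hM : M = sSup ((fun y => |g y - gt y|) '' Set.Icc (-1:ℝ) 1)) :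
    (∫ x in (-1:ℝ)..1, ((F x)^2 + (deriv F x)^2)) ≤ 16 * M^2 := by
  set h : ℝ → ℝ := fun y => g y - gt y
  set L := expConvLeft h (-1)
  set R := expConvRight h 1
  have hh : ContinuousOn h (Icc (-1) 1) := hg.sub hgt
  have hhM : ∀ y ∈ Icc (-1:ℝ) 1, |h y| ≤ M := fun y hy =>
    hM ▸ le_csSup (isCompact_Icc.image_of_continuousOn hh.abs).bddAbove (mem_image_of_mem _ hy)
  have hFLR : ∀ x ∈ Icc (-1:ℝ) 1, F x = L x + R x := fun x hx =>
    (hF x).trans (integral_exp_neg_abs_sub_mul hh hx)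
  have hderiv : ∀ x ∈ Ioo (-1:ℝ) 1, deriv F x = R x - L x := fun x hx => by
    have hev : F =ᶠ[𝓝 x] L + R := eventually_of_mem (Icc_mem_nhds hx.1 hx.2) hFLR
    rw [hev.deriv_eq, ((hasDerivAt_expConvLeft hh hx).add (hasDerivAt_expConvRight hh hx)).deriv]
    ring
  have hpoint : ∀ x ∈ Ioo (-1:ℝ) 1, ‖F x ^ 2 + deriv F x ^ 2‖ ≤ 4 * M ^ 2 := fun x hx => by
    have hL := abs_le.1 (abs_expConvLeft_le hx.1.le fun y hy => hhM y ⟨hy.1, hy.2.trans hx.2.le⟩)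
    have hR := abs_le.1 (abs_expConvRight_le hx.2.le fun y hy => hhM y ⟨hx.1.le.trans hy.1, hy.2⟩)
    rw [hFLR x (Ioo_subset_Icc_self hx), hderiv x hx, norm_of_nonneg (by positivity)]
    nlinarith
  calc (∫ x in (-1:ℝ)..1, ((F x)^2 + (deriv F x)^2))
      ≤ ‖∫ x in (-1:ℝ)..1, ((F x)^2 + (deriv F x)^2)‖ := le_norm_self _
    _ ≤ 4 * M ^ 2 * |1 - (-1)| :=
      norm_integral_le_of_norm_le_const_ae <| (Measure.ae_ne volume 1).mono fun x hx1 hx => by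
        rw [uIoc_of_le (by norm_num)] at hx
        exact hpoint x ⟨hx.1, lt_of_le_of_ne hx.2 hx1⟩
    _ ≤ 16 * M ^ 2 := by norm_num; nlinarith [sq_nonneg M]
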